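/- Let (A, □) be a Heyting algebra with operators and define R_□ on prime filters as: p R_□ q iff ∀a, □a ∈ p → a ∈ q. Then for every a ∈ A and every prime filter p: □a ∈ p if and only if for all prime filters q with p R_□ q, a ∈ q. -/
import Mathlib


/-- A prime filter of a lattice: a nonempty, upward-closed, meet-closed,
proper subset `p` such that `a ⊔ b ∈ p` implies `a ∈ p` or `b ∈ p`. -/
def IsPrimeFilter {A : Type*} [Lattice A] (p : Set A) : Prop :=
  p.Nonempty ∧ (∀ ⦃a b : A⦄, a ∈ p → a ≤ b → b ∈ p) ∧
    (∀ ⦃a b : A⦄, a ∈ p → b ∈ p → a ⊓ b ∈ p) ∧ p ≠ Set.univ ∧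
    (∀ ⦃a b : A⦄, a ⊔ b ∈ p → a ∈ p ∨ b ∈ p)

/-- The relation `R_□` on prime filters induced by an operator `□`:
`p R_□ q` iff `□ a ∈ p` implies `a ∈ q` for all `a`. -/
def boxRel {A : Type*} [Lattice A] (box : A → A) (p q : Set A) : Prop :=
  ∀ a : A, box a ∈ p → a ∈ q

/-- Filters (not necessarily prime). -/
def IsFilt {A : Type*} [Lattice A] (p : Set A) : Prop :=
  p.Nonempty ∧ (∀ ⦃a b : A⦄, a ∈ p → a ≤ b → b ∈ p) ∧
    (∀ ⦃a b : A⦄, a ∈ p → b ∈ p → a ⊓ b ∈ p)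

/-- For a Heyting algebra with operators `(A, □)`, every `a ∈ A` and every
prime filter `p`: `□ a ∈ p` iff `a` belongs to every prime filter `q` with
`p R_□ q`. -/
theorem box_mem_iff_forall_boxRel
    {A : Type*} [HeytingAlgebra A] (box : A → A)
    (htop : box ⊤ = ⊤) (hmeet : ∀ a b : A, box a ⊓ box b = box (a ⊓ b))
    (a : A) (p : Set A) (hp : IsPrimeFilter p) :
    box a ∈ p ↔ ∀ q : Set A, IsPrimeFilter q → boxRel box p q → a ∈ q := by
  obtain ⟨⟨x, hx⟩, hup, hmeetp, hproper, hprime⟩ := hp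
  constructor
  · intro hba q _ hrel
    exact hrel a hba
  · intro H
    by_contra hba
    -- the base filter
    set F : Set A := {b | box b ∈ p} with hF
    have hmono : ∀ {x y : A}, x ≤ y → box x ≤ box y := by
      intro x y hxy
      have : box x = box x ⊓ box y := by
        rw [hmeet, inf_eq_left.mpr hxy]
      rw [this]; exact inf_le_right
    have hFfilt : IsFilt F ∧ a ∉ F := by
      refine ⟨⟨⟨⊤, ?_⟩, ?_, ?_⟩, hba⟩
      · show box ⊤ ∈ p; rw [htop]; exact hup hx le_top
      · intro u v hu huv
        exact hup hu (hmono huv)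
      · intro u v hu hv
        show box (u ⊓ v) ∈ p
        rw [← hmeet]; exact hmeetp hu hv
    -- Zorn
    set S : Set (Set A) := {G | IsFilt G ∧ F ⊆ G ∧ a ∉ G} with hS
    have hFS : F ∈ S := ⟨hFfilt.1, subset_rfl, hFfilt.2⟩
    have hchainub : ∀ c ⊆ S, IsChain (· ⊆ ·) c → c.Nonempty →
        ∃ ub ∈ S, ∀ s ∈ c, s ⊆ ub := by
      intro c hcS hchain hcne
      refine ⟨⋃₀ c, ⟨⟨?_, ?_, ?_⟩, ?_, ?_⟩, fun s hs => Set.subset_sUnion_of_mem hs⟩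
      · obtain ⟨s, hs⟩ := hcne
        obtain ⟨y, hy⟩ := (hcS hs).1.1
        exact ⟨y, s, hs, hy⟩
      · rintro u v ⟨s, hs, hus⟩ huv
        exact ⟨s, hs, (hcS hs).1.2.1 hus huv⟩
      · rintro u v ⟨s, hs, hus⟩ ⟨t, ht, hvt⟩
        rcases hchain.total hs ht with h | h
        · exact ⟨t, ht, (hcS ht).1.2.2 (h hus) hvt⟩
        · exact ⟨s, hs, (hcS hs).1.2.2 hus (h hvt)⟩
      · obtain ⟨s, hs⟩ := hcne
        exact (hcS hs).2.1.trans (Set.subset_sUnion_of_mem hs)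
      · rintro ⟨s, hs, has⟩
        exact (hcS hs).2.2 has
    obtain ⟨m, hFm, hmS, hmax⟩ := zorn_subset_nonempty S hchainub F hFS
    obtain ⟨⟨hmne, hmup, hmmeet⟩, hFsub, ham⟩ := hmS
    -- m is prime
    have hmprime : ∀ ⦃u v : A⦄, u ⊔ v ∈ m → u ∈ m ∨ v ∈ m := by
      intro u v huv
      by_contra hcon
      push_neg at hcon
      obtain ⟨hu, hv⟩ := hcon
      -- filter generated by m ∪ {u}
      have key : ∀ w : A, w ∉ m → ∃ g ∈ m, g ⊓ w ≤ a := by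
        intro w hw
        set G : Set A := {z | ∃ g ∈ m, g ⊓ w ≤ z} with hG
        by_contra haG
        push_neg at haG
        have hGS : G ∈ S := by
          refine ⟨⟨⟨w, ?_⟩, ?_, ?_⟩, ?_, ?_⟩
          · obtain ⟨g, hg⟩ := hmne
            exact ⟨g, hg, inf_le_right⟩
          · rintro x' y' ⟨g, hg, hgx⟩ hxy
            exact ⟨g, hg, hgx.trans hxy⟩
          · rintro x' y' ⟨g, hg, hgx⟩ ⟨g', hg', hgy⟩
            refine ⟨g ⊓ g', hmmeet hg hg', ?_⟩
            calc g ⊓ g' ⊓ w ≤ (g ⊓ w) ⊓ (g' ⊓ w) := by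
                    simp [inf_assoc, inf_comm, inf_left_comm, le_refl]
              _ ≤ x' ⊓ y' := inf_le_inf hgx hgy
          · intro z hz
            exact ⟨z, hFsub hz, inf_le_left⟩
          · rintro ⟨g, hg, hga⟩
            exact haG g hg hga
        have hmG : m ⊆ G := fun z hz =>
          ⟨z, hz, inf_le_left⟩
        obtain ⟨g, hg⟩ := hmne
        exact hw (hmax hGS hmG ⟨g, hg, inf_le_right⟩)
      obtain ⟨g₁, hg₁, h₁⟩ := key u hu
      obtain ⟨g₂, hg₂, h₂⟩ := key v hv
      apply ham
      apply hmup (hmmeet (hmmeet hg₁ hg₂) huv)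
      have : (g₁ ⊓ g₂) ⊓ (u ⊔ v) = ((g₁ ⊓ g₂) ⊓ u) ⊔ ((g₁ ⊓ g₂) ⊓ v) := inf_sup_left _ _ _
      rw [this]
      apply sup_le
      · exact le_trans (inf_le_inf_right u inf_le_left) h₁
      · exact le_trans (inf_le_inf_right v inf_le_right) h₂
    have hmproper : m ≠ Set.univ := fun h => ham (h ▸ Set.mem_univ a)
    exact ham (H m ⟨hmne, hmup, hmmeet, hmproper, hmprime⟩
      (fun b hb => hFsub hb))
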